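/- For every m ∈ ℕ there exists a graph G with tw(G) ≤ m and a non-piercing family 𝓗 of connected subgraphs of G such that every dual support Q* (a graph on 𝓗 in which {H ∈ 𝓗 : v ∈ V(H)} induces a connected subgraph for each v ∈ V(G)) contains an N × N grid as a subgraph with N = C(⌊m/2⌋, ⌊⌊m/2⌋/2⌋), and hence tw(Q*) ≥ 2^{⌊m/2⌋}/√m. -/

import Mathlib

open scoped ENNReal

/-- A tree decomposition of a graph `G`: a tree `T` with bags `bag i ⊆ V` such that
every vertex appears in a bag, every edge lies in a bag, and the bags containing a
fixed vertex form a connected subtree. -/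
def IsTreeDecomp {V ι : Type} (G : SimpleGraph V) (T : SimpleGraph ι) (bag : ι → Set V) : Prop :=
  T.IsTree ∧ (∀ v, ∃ i, v ∈ bag i) ∧
    (∀ u v, G.Adj u v → ∃ i, u ∈ bag i ∧ v ∈ bag i) ∧
    (∀ v, (T.induce {i | v ∈ bag i}).Connected)

/-- Width of a tree decomposition: (max bag size) − 1. -/
noncomputable def decompWidth {V ι : Type} (bag : ι → Set V) : ℕ∞ :=
  (⨆ i, (bag i).encard) - 1

/-- Treewidth: the infimum of widths of tree decompositions. -/
noncomputable def treewidth {V : Type} (G : SimpleGraph V) : ℕ∞ :=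
  sInf {w : ℕ∞ | ∃ (ι : Type) (T : SimpleGraph ι) (bag : ι → Set V),
    IsTreeDecomp G T bag ∧ w = decompWidth bag}

/-- A family of vertex sets is non-piercing in `G` if every pairwise difference
(when nonempty) induces a connected subgraph of `G`. -/
def NonPiercing {V : Type} (G : SimpleGraph V) (F : Set (Set V)) : Prop :=
  ∀ H ∈ F, ∀ H' ∈ F, (H \ H').Nonempty → (G.induce (H \ H')).Connected

/-- Outerplanarity via a one-page (circular, non-crossing) layout. -/
def Outerplanar {α : Type} (Q : SimpleGraph α) : Prop :=
  ∃ f : α → ℕ, Function.Injective f ∧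
    ∀ a b c d : α, Q.Adj a b → Q.Adj c d →
      ¬ (f a < f c ∧ f c < f b ∧ f b < f d)

/-- `a, b, c` appear in this (clockwise) cyclic order on the cycle `Fin n`. -/
def Cyc3 {n : ℕ} (a b c : Fin n) : Prop :=
  (a < b ∧ b < c) ∨ (b < c ∧ c < a) ∨ (c < a ∧ a < b)

/-- `a, b, c, d` appear in this (clockwise) cyclic order on the cycle `Fin n`. -/
def Cyc4 {n : ℕ} (a b c d : Fin n) : Prop :=
  (a < b ∧ b < c ∧ c < d) ∨ (b < c ∧ c < d ∧ d < a) ∨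
    (c < d ∧ d < a ∧ a < b) ∨ (d < a ∧ a < b ∧ b < c)

/-- Open arc of vertices strictly between `u` and `v` clockwise. -/
def arcO {n : ℕ} (u v : Fin n) : Set (Fin n) := {w | Cyc3 u w v}

/-- Closed arc of vertices from `u` to `v` clockwise (inclusive). -/
def arcC {n : ℕ} (u v : Fin n) : Set (Fin n) := {u} ∪ {v} ∪ {w | Cyc3 u w v}

/-- The cycle system is `axax`-free. -/
def AxaxFree {n : ℕ} (F : Set (Set (Fin n))) : Prop :=
  ¬ ∃ H ∈ F, ∃ H' ∈ F, ∃ a₁ x₁ a₂ x₂ : Fin n,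
    Cyc4 a₁ x₁ a₂ x₂ ∧ a₁ ∈ H \ H' ∧ a₂ ∈ H \ H' ∧ x₁ ∈ H' ∧ x₂ ∈ H'

/-- The cycle system is `abab`-free. -/
def AbabFree {n : ℕ} (F : Set (Set (Fin n))) : Prop :=
  ¬ ∃ H ∈ F, ∃ H' ∈ F, ∃ a₁ b₁ a₂ b₂ : Fin n,
    Cyc4 a₁ b₁ a₂ b₂ ∧ a₁ ∈ H \ H' ∧ a₂ ∈ H \ H' ∧ b₁ ∈ H' \ H ∧ b₂ ∈ H' \ H

/-- The vertices appearing in bags of the component of `T` minus the edge `{x,y}`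
that contains `x` (the `x`-side of the tree decomposition). -/
def sideVerts {V ι : Type} (T : SimpleGraph ι) (bag : ι → Set V) (x y : ι) : Set V :=
  ⋃ i ∈ {i | (T.deleteEdges {s(x, y)}).Reachable x i}, bag i

/-- Adjacency in the `N × N` grid graph. -/
def gridAdj {N : ℕ} (p q : Fin N × Fin N) : Prop :=
  (p.1 = q.1 ∧ (p.2.val + 1 = q.2.val ∨ q.2.val + 1 = p.2.val)) ∨
    (p.2 = q.2 ∧ (p.1.val + 1 = q.1.val ∨ q.1.val + 1 = p.1.val))

/-- Clockwise distance from `b` to `a` on the cycle `Fin n`. -/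
def relpos {n : ℕ} (a b : Fin n) : ℕ := (a.val + n - b.val) % n

/-- Lexicographic comparison on pairs of naturals. -/
def lexLe (p q : ℕ × ℕ) : Prop := p.1 < q.1 ∨ (p.1 = q.1 ∧ p.2 ≤ q.2)

/-- A set of indices forming a (possibly empty) cyclic interval of `Fin m`. -/
def CycInterval {m : ℕ} (S : Set (Fin m)) : Prop := S = ∅ ∨ ∃ i j : Fin m, S = arcC i j

/-- Maximal elements of a family of sets under inclusion. -/
def maxElems {X : Type} (F : Set (Set X)) : Set (Set X) :=
  {H ∈ F | ∀ H' ∈ F, H ⊆ H' → H = H'}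

/-!
Let `n = ⌊m/2⌋` and `K = C(m, n)`. Take `m` hubs forming a clique, one vertex for every ordered
pair `(i, j)` of indices `i, j < K`, and join every pair vertex to every hub; the hubs cover all
edges, so the treewidth is at most `m`. The `i`-th subgraph consists of the pair vertices
containing `i` together with the hubs of the `i`-th `n`-subset of the hubs. These hub sets form an
antichain, so every difference of two subgraphs contains a hub and is connected. The pair vertex
`(i, j)` lies in exactly the `i`-th and `j`-th subgraph, so every dual support contains a
`K`-clique, hence an `N × N` grid (`N² ≤ C(2n, n) ≤ K` by Vandermonde), and by the Helly property
of subtrees some bag of any tree decomposition contains the whole clique, so the treewidth is at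
least `K - 1 ≥ 2ⁿ/√m`.
-/

namespace SimpleGraph

variable {V : Type} {G : SimpleGraph V}

lemma connected_induce_of_forall_adj {A : Set V} {c : V} (hc : c ∈ A)
    (hadj : ∀ x ∈ A, c ≠ x → G.Adj c x) : (G.induce A).Connected :=
  Connected.of_isUniversal (v := ⟨c, hc⟩) fun x hx => hadj x x.2 fun h => hx (Subtype.ext h)

lemma Connected.adj_of_induce_pair {a b : V} (hab : a ≠ b)
    (h : (G.induce {a, b}).Connected) : G.Adj a b := by
  obtain ⟨p⟩ := h.preconnected ⟨a, by simp⟩ ⟨b, by simp⟩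
  obtain ⟨d, -, hfst, hsnd⟩ :=
    p.exists_boundary_dart {⟨a, by simp⟩} rfl fun h => hab (by simpa using h.symm)
  obtain ⟨⟨⟨x, hx⟩, ⟨y, hy⟩⟩, hxy⟩ := d
  simp only [Set.mem_singleton_iff, Subtype.ext_iff] at hfst hsnd
  obtain rfl : x = a := hfst
  obtain rfl : y = b := by simpa [hsnd] using hy
  exact hxy

lemma exists_walk_support_subset {A : Set V} (hA : (G.induce A).Preconnected) {u v : V}
    (hu : u ∈ A) (hv : v ∈ A) : ∃ q : G.Walk u v, ∀ x ∈ q.support, x ∈ A := by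
  obtain ⟨w⟩ := hA ⟨u, hu⟩ ⟨v, hv⟩
  refine ⟨w.map (Embedding.induce A).toHom, fun x hx => ?_⟩
  obtain ⟨y, -, rfl⟩ := List.mem_map.mp (Walk.support_map _ _ ▸ hx)
  exact y.2

namespace IsAcyclic

lemma support_subset_of_isPath (hG : G.IsAcyclic) {u v : V} {p : G.Walk u v} (hp : p.IsPath)
    (q : G.Walk u v) : p.support ⊆ q.support := by
  classical
  have : p = q.bypass := congrArg Subtype.val
    ((hG.subsingleton_path u v).elim ⟨p, hp⟩ ⟨q.bypass, q.bypass_isPath⟩)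
  exact this ▸ q.support_bypass_subset_support

lemma mem_of_mem_support_of_isPath (hG : G.IsAcyclic) {A : Set V}
    (hA : (G.induce A).Preconnected) {u v : V} {p : G.Walk u v} (hp : p.IsPath)
    (hu : u ∈ A) (hv : v ∈ A) {x : V} (hx : x ∈ p.support) : x ∈ A := by
  obtain ⟨q, hq⟩ := exists_walk_support_subset hA hu hv
  exact hq x (hG.support_subset_of_isPath hp q hx)

lemma connected_induce_inter (hG : G.IsAcyclic) {S S' : Set V} (hS : (G.induce S).Connected)
    (hS' : (G.induce S').Connected) (hne : (S ∩ S').Nonempty) :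
    (G.induce (S ∩ S')).Connected := by
  classical
  obtain ⟨u, hu⟩ := hne
  refine induce_connected_of_patches u hu fun {v} hv => ?_
  obtain ⟨q, -⟩ := exists_walk_support_subset hS.preconnected hu.1 hv.1
  have hp := q.bypass_isPath
  refine ⟨{x | x ∈ q.bypass.support}, fun x hx => ⟨?_, ?_⟩, q.bypass.start_mem_support,
    q.bypass.end_mem_support, q.bypass.connected_induce_support.preconnected _ _⟩
  · exact hG.mem_of_mem_support_of_isPath hS.preconnected hp hu.1 hv.1 hx
  · exact hG.mem_of_mem_support_of_isPath hS'.preconnected hp hu.2 hv.2 hx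

/-- The path from `a ∈ S₁ ∩ S₂` to `b ∈ S₁ ∩ S₃` stays in `S₁` and in `S₂ ∪ S₃`; where it leaves
`S₂` it crosses a bridge, which the detour through `c ∈ S₂ ∩ S₃` would have to avoid. -/
lemma inter_inter_nonempty (hG : G.IsAcyclic) {S₁ S₂ S₃ : Set V}
    (h₁ : (G.induce S₁).Connected) (h₂ : (G.induce S₂).Connected)
    (h₃ : (G.induce S₃).Connected) (h₁₂ : (S₁ ∩ S₂).Nonempty) (h₁₃ : (S₁ ∩ S₃).Nonempty)
    (h₂₃ : (S₂ ∩ S₃).Nonempty) : (S₁ ∩ S₂ ∩ S₃).Nonempty := by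
  classical
  by_contra hempty
  have hnot : ∀ x ∈ S₁, x ∈ S₂ → x ∉ S₃ := fun x h1 h2 h3 => hempty ⟨x, ⟨h1, h2⟩, h3⟩
  obtain ⟨a, ha₁, ha₂⟩ := h₁₂
  obtain ⟨b, hb₁, hb₃⟩ := h₁₃
  obtain ⟨c, hc₂, hc₃⟩ := h₂₃
  obtain ⟨q, -⟩ := exists_walk_support_subset h₁.preconnected ha₁ hb₁
  set p := q.bypass
  have hp₁ : ∀ x ∈ p.support, x ∈ S₁ := fun x hx =>
    hG.mem_of_mem_support_of_isPath h₁.preconnected q.bypass_isPath ha₁ hb₁ hx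
  have hp₂₃ : ∀ x ∈ p.support, x ∈ S₂ ∪ S₃ := fun x hx =>
    hG.mem_of_mem_support_of_isPath
      (induce_union_connected h₂.preconnected h₃.preconnected ⟨c, hc₂, hc₃⟩).preconnected
      q.bypass_isPath (Or.inl ha₂) (Or.inr hb₃) hx
  obtain ⟨d, hd, hd₂, hd₂'⟩ := p.exists_boundary_dart S₂ ha₂ fun hb₂ => hnot b hb₁ hb₂ hb₃
  have hu₃ : d.fst ∉ S₃ := hnot _ (hp₁ _ (p.dart_fst_mem_support_of_mem_darts hd)) hd₂
  have hw₃ : d.snd ∈ S₃ := (hp₂₃ _ (p.dart_snd_mem_support_of_mem_darts hd)).resolve_left hd₂'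
  have hbridge := isAcyclic_iff_forall_adj_isBridge.mp hG d.adj
  obtain ⟨r₂, hr₂⟩ := exists_walk_support_subset h₂.preconnected hd₂ hc₂
  obtain ⟨r₃, hr₃⟩ := exists_walk_support_subset h₃.preconnected hc₃ hw₃
  have hmem := isBridge_iff_forall_walk_mem_edges.mp hbridge (r₂.append r₃)
  rcases List.mem_append.mp (Walk.edges_append r₂ r₃ ▸ hmem) with he | he
  · exact hd₂' (hr₂ _ (r₂.snd_mem_support_of_mem_edges he))
  · exact hu₃ (hr₃ _ (r₃.fst_mem_support_of_mem_edges he))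

-- Relativizing to a subtree `R` lets the induction step pass to `R ∩ S a`.
lemma exists_mem_forall_mem_of_inter_nonempty (hG : G.IsAcyclic) {κ : Type} (s : Finset κ)
    {S : κ → Set V} (hS : ∀ k ∈ s, (G.induce (S k)).Connected) :
    ∀ {R : Set V}, (G.induce R).Connected → (∀ k ∈ s, ∀ l ∈ s, (R ∩ S k ∩ S l).Nonempty) →
      ∃ x ∈ R, ∀ k ∈ s, x ∈ S k := by
  classical
  induction s using Finset.induction_on with
  | empty =>
    intro R hR _
    obtain ⟨⟨x, hx⟩⟩ := hR.nonempty
    exact ⟨x, hx, by simp⟩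
  | insert a s _ ih =>
    intro R hR hpair
    have hS' : ∀ k ∈ s, (G.induce (S k)).Connected := fun k hk => hS k (by simp [hk])
    have hpair' : ∀ k ∈ s, ∀ l ∈ s, (R ∩ S k ∩ S l).Nonempty := fun k hk l hl =>
      hpair k (by simp [hk]) l (by simp [hl])
    have hRS : ∀ k ∈ insert a s, (G.induce (R ∩ S k)).Connected := fun k hk =>
      hG.connected_induce_inter hR (hS k hk) ((hpair k hk k hk).mono Set.inter_subset_left)
    have ha : a ∈ insert a s := by simp
    obtain ⟨x, ⟨hxR, hxa⟩, hx⟩ := ih hS' (hRS a ha) fun k hk l hl => by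
      obtain ⟨x, ⟨⟨hxR, hxa⟩, -, hxk⟩, -, hxl⟩ :=
        hG.inter_inter_nonempty (hRS a ha) (hRS k (by simp [hk])) (hRS l (by simp [hl]))
          ((hpair a ha k (by simp [hk])).mono fun y hy => ⟨⟨hy.1.1, hy.1.2⟩, hy.1.1, hy.2⟩)
          ((hpair a ha l (by simp [hl])).mono fun y hy => ⟨⟨hy.1.1, hy.1.2⟩, hy.1.1, hy.2⟩)
          ((hpair' k hk l hl).mono fun y hy => ⟨⟨hy.1.1, hy.1.2⟩, hy.1.1, hy.2⟩)
      exact ⟨x, ⟨⟨hxR, hxa⟩, hxk⟩, hxl⟩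
    exact ⟨x, hxR, by simpa [hxa] using hx⟩

end IsAcyclic

theorem IsTree.helly_theorem (hG : G.IsTree) {κ : Type} (s : Finset κ) {S : κ → Set V}
    (hS : ∀ k ∈ s, (G.induce (S k)).Connected)
    (hpair : ∀ k ∈ s, ∀ l ∈ s, (S k ∩ S l).Nonempty) : ∃ x, ∀ k ∈ s, x ∈ S k := by
  obtain ⟨x, -, hx⟩ := hG.isAcyclic.exists_mem_forall_mem_of_inter_nonempty s hS
    ((induceUnivIso G).connected_iff.mpr hG.connected) (by simpa using hpair)
  exact ⟨x, hx⟩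

end SimpleGraph

open SimpleGraph

lemma le_treewidth_of_isNClique {α : Type} {Q : SimpleGraph α} {n : ℕ} {s : Finset α}
    (hs : Q.IsNClique n s) : ((n - 1 : ℕ) : ℕ∞) ≤ treewidth Q := by
  refine le_sInf ?_
  rintro w ⟨ι, T, bag, ⟨hT, hcov, hedge, hconn⟩, rfl⟩
  obtain ⟨i, hi⟩ := hT.helly_theorem s (S := fun a => {i | a ∈ bag i}) (fun a _ => hconn a)
    fun a ha b hb => by
      by_cases hab : a = b
      · subst hab
        obtain ⟨i, hi⟩ := hcov a
        exact ⟨i, hi, hi⟩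
      · exact hedge a b (hs.isClique ha hb hab)
  have hcard : (n : ℕ∞) ≤ (bag i).encard := by
    rw [← hs.card_eq, ← Set.encard_coe_eq_coe_finsetCard]
    exact Set.encard_le_encard fun a ha => hi a ha
  calc ((n - 1 : ℕ) : ℕ∞) = n - 1 := by simp
    _ ≤ (bag i).encard - 1 := tsub_le_tsub_right hcard 1
    _ ≤ decompWidth bag := tsub_le_tsub_right (le_iSup (fun j => (bag j).encard) i) 1

lemma treewidth_le_decompWidth {V ι : Type} {G : SimpleGraph V} {T : SimpleGraph ι}
    {bag : ι → Set V} (h : IsTreeDecomp G T bag) : treewidth G ≤ decompWidth bag :=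
  sInf_le ⟨ι, T, bag, h, rfl⟩

lemma treewidth_le_encard_of_forall_adj_mem {V : Type} (G : SimpleGraph V) {W : Set V}
    (hW : ∀ u v, G.Adj u v → u ∈ W ∨ v ∈ W) : treewidth G ≤ W.encard := by
  let bag : Option V → Set V := fun i => i.elim W (insert · W)
  have hdecomp : IsTreeDecomp G (starGraph none) bag := by
    refine ⟨isTree_starGraph none, fun v => ⟨some v, Set.mem_insert v W⟩, fun u v huv => ?_,
      fun x => ?_⟩
    · rcases hW u v huv with hu | hv
      · exact ⟨some v, Set.mem_insert_of_mem v hu, Set.mem_insert v W⟩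
      · exact ⟨some u, Set.mem_insert u W, Set.mem_insert_of_mem u hv⟩
    · by_cases hx : x ∈ W
      · exact connected_induce_of_forall_adj (c := none) hx fun i _ hi => starGraph_center_adj hi
      · refine connected_induce_of_forall_adj (c := some x) (Set.mem_insert x W) ?_
        rintro (_ | y) hxy hne
        · exact absurd hxy hx
        · exact absurd (congrArg some ((Set.mem_insert_iff.mp hxy).resolve_right hx)) hne
  refine (treewidth_le_decompWidth hdecomp).trans (tsub_le_iff_right.mpr (iSup_le ?_))
  rintro (_ | x)
  · exact le_self_add
  · exact Set.encard_insert_le W x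

def IsDualSupport {V : Type} (𝓗 : Set (Set V)) (Q : SimpleGraph 𝓗) : Prop :=
  ∀ v : V, {H : 𝓗 | v ∈ (H : Set V)}.Nonempty → (Q.induce {H : 𝓗 | v ∈ (H : Set V)}).Connected

def HasPairWitnesses {ι V : Type} (H : ι → Set V) : Prop :=
  ∀ i j, i ≠ j → ∃ v, ∀ t, v ∈ H t ↔ t = i ∨ t = j

namespace IsDualSupport

variable {V : Type} {𝓗 : Set (Set V)} {Q : SimpleGraph 𝓗}

lemma adj_of_forall_mem_iff (hQ : IsDualSupport 𝓗 Q) {A B : 𝓗} (hAB : A ≠ B) {v : V}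
    (hv : ∀ H : 𝓗, v ∈ (H : Set V) ↔ H = A ∨ H = B) : Q.Adj A B := by
  have hconn := hQ v ⟨A, (hv A).2 (Or.inl rfl)⟩
  rw [show {H : 𝓗 | v ∈ (H : Set V)} = {A, B} from Set.ext hv] at hconn
  exact hconn.adj_of_induce_pair hAB

lemma isNClique_image_rangeFactorization {ι : Type} [Fintype ι] {H : ι → Set V}
    {Q : SimpleGraph (Set.range H)} (hQ : IsDualSupport (Set.range H) Q)
    (hinj : Function.Injective H) (hwit : HasPairWitnesses H) :
    Q.IsNClique (Fintype.card ι) (Finset.univ.image (Set.rangeFactorization H)) := by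
  classical
  have hinj' := Set.rangeFactorization_injective.mpr hinj
  refine ⟨?_, by rw [Finset.card_image_of_injective _ hinj', Finset.card_univ]⟩
  simp only [Finset.coe_image, Finset.coe_univ, Set.image_univ]
  rintro _ ⟨i, rfl⟩ _ ⟨j, rfl⟩ hne
  obtain ⟨v, hv⟩ := hwit i j fun h => hne (h ▸ rfl)
  refine hQ.adj_of_forall_mem_iff (v := v) hne fun ⟨_, t, rfl⟩ => ?_
  simpa [Subtype.ext_iff, Set.rangeFactorization, hinj.eq_iff] using hv t

end IsDualSupport

lemma gridAdj.ne {N : ℕ} {p q : Fin N × Fin N} (h : gridAdj p q) : p ≠ q := by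
  rintro rfl
  rcases h with ⟨-, h | h⟩ | ⟨-, h | h⟩ <;> omega

lemma exists_injective_gridAdj_of_isNClique {α : Type} {Q : SimpleGraph α} {n N : ℕ}
    {s : Finset α} (hs : Q.IsNClique n s) (hN : N * N ≤ n) :
    ∃ f : Fin N × Fin N → α, Function.Injective f ∧ ∀ p q, gridAdj p q → Q.Adj (f p) (f q) := by
  let e : Fin N × Fin N → s :=
    s.equivFin.symm ∘ Fin.castLE (hN.trans hs.card_eq.ge) ∘ finProdFinEquiv
  have he : Function.Injective e :=
    s.equivFin.symm.injective.comp ((Fin.castLE_injective _).comp finProdFinEquiv.injective)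
  refine ⟨Subtype.val ∘ e, Subtype.val_injective.comp he, fun p q hpq => ?_⟩
  exact hs.isClique (e p).2 (e q).2 fun h => hpq.ne (he (Subtype.ext h))

/-- Every dual support of such a family contains a `K`-clique. -/
def HasWitnessedFamily (m K : ℕ) : Prop :=
  ∃ (ι : Type) (_ : Fintype ι) (V : Type) (G : SimpleGraph V) (H : ι → Set V),
    Fintype.card ι = K ∧ (∀ i, (G.induce (H i)).Connected) ∧ NonPiercing G (Set.range H) ∧
      treewidth G ≤ m ∧ Function.Injective H ∧ HasPairWitnesses H

namespace SimpleGraph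

def completeSplitGraph {V : Type} (W : Set V) : SimpleGraph V :=
  fromRel fun _ y => y ∈ W

variable {V : Type} {W : Set V}

@[simp]
lemma completeSplitGraph_adj {x y : V} :
    (completeSplitGraph W).Adj x y ↔ x ≠ y ∧ (y ∈ W ∨ x ∈ W) := by
  simp [completeSplitGraph]

lemma connected_induce_completeSplitGraph {A : Set V} {c : V} (hcA : c ∈ A) (hcW : c ∈ W) :
    ((completeSplitGraph W).induce A).Connected :=
  connected_induce_of_forall_adj hcA fun _ _ hne => completeSplitGraph_adj.mpr ⟨hne, Or.inr hcW⟩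

lemma treewidth_completeSplitGraph_le : treewidth (completeSplitGraph W) ≤ W.encard :=
  treewidth_le_encard_of_forall_adj_mem _ fun _ _ h => (completeSplitGraph_adj.mp h).2.symm

end SimpleGraph

open SimpleGraph

section PairConstruction

variable {ι W : Type}

/-- Member `i` of the family: the pair vertices `(p, q)` with `i ∈ {p, q}`, together with the
hubs in `S i`. -/
def pairFamily (S : ι → Set W) (i : ι) : Set ((ι × ι) ⊕ W) :=
  {x | Sum.elim (fun p => p.1 = i ∨ p.2 = i) (· ∈ S i) x}

lemma inl_mem_pairFamily {S : ι → Set W} {p : ι × ι} {i : ι} :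
    Sum.inl p ∈ pairFamily S i ↔ p.1 = i ∨ p.2 = i := Iff.rfl

lemma inr_mem_pairFamily {S : ι → Set W} {w : W} {i : ι} :
    Sum.inr w ∈ pairFamily S i ↔ w ∈ S i := Iff.rfl

lemma hasWitnessedFamily_pairFamily [Fintype ι] {m : ℕ} (S : ι → Set (Fin m))
    (hne : ∀ i, (S i).Nonempty) (hanti : ∀ i j, i ≠ j → ¬ S i ⊆ S j) :
    HasWitnessedFamily m (Fintype.card ι) := by
  refine ⟨ι, inferInstance, _, completeSplitGraph (Set.range Sum.inr), pairFamily S, rfl,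
    fun i => ?_, ?_, ?_, fun i j hij => ?_, fun i j hij => ⟨Sum.inl (i, j), fun t => ?_⟩⟩
  · obtain ⟨w, hw⟩ := hne i
    exact connected_induce_completeSplitGraph (inr_mem_pairFamily.mpr hw) ⟨w, rfl⟩
  · rintro _ ⟨i, rfl⟩ _ ⟨j, rfl⟩ hdiff
    have hij : i ≠ j := by rintro rfl; simp at hdiff
    obtain ⟨w, hwi, hwj⟩ := Set.sdiff_nonempty.mpr (hanti i j hij)
    exact connected_induce_completeSplitGraph (c := Sum.inr w) ⟨hwi, hwj⟩ ⟨w, rfl⟩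
  · refine treewidth_completeSplitGraph_le.trans_eq ?_
    simp [← Set.image_univ, Sum.inr_injective.encard_image]
  · have : Sum.inl (i, i) ∈ pairFamily S j := hij ▸ inl_mem_pairFamily.mpr (Or.inl rfl)
    simpa using (inl_mem_pairFamily.mp this).symm
  · simp only [inl_mem_pairFamily, eq_comm]

end PairConstruction

lemma hasWitnessedFamily_top {m : ℕ} (H : Fin (m + 1) → Set (Fin (m + 1)))
    (hne : ∀ i, (H i).Nonempty) (hinj : Function.Injective H) (hwit : HasPairWitnesses H) :
    HasWitnessedFamily m (m + 1) := by
  have hconn : ∀ A : Set (Fin (m + 1)), A.Nonempty → ((⊤ : SimpleGraph _).induce A).Connected :=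
    fun A hA => by simpa [connected_top_iff] using hA.to_subtype
  refine ⟨Fin (m + 1), inferInstance, _, ⊤, H, Fintype.card_fin _, fun i => hconn _ (hne i),
    fun _ _ _ _ hdiff => hconn _ hdiff, ?_, hinj, hwit⟩
  refine (treewidth_le_encard_of_forall_adj_mem (W := Set.range Fin.succ) ⊤ ?_).trans_eq ?_
  · intro u v huv
    simp only [Set.mem_range, Fin.exists_succ_eq]
    by_contra! h
    exact huv.ne (h.1.trans h.2.symm)
  · simp [← Set.image_univ, (Fin.succ_injective m).encard_image]

lemma hasWitnessedFamily_of_lt_three {m : ℕ} (hm : m < 3) : HasWitnessedFamily m (m + 1) := by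
  interval_cases m
  · exact hasWitnessedFamily_top (fun _ => Set.univ) (fun _ => Set.univ_nonempty)
      (fun i j _ => Fin.ext (by omega)) fun i j hij => absurd (Fin.ext (by omega)) hij
  · refine hasWitnessedFamily_top (fun i => {x | i ≤ x}) (fun _ => ⟨1, Fin.le_last _⟩)
      (fun i j hij => ?_) (by simp only [HasPairWitnesses, Set.mem_ofPred_eq]; decide)
    exact le_antisymm ((Set.ext_iff.mp hij j).mpr (le_refl j))
      ((Set.ext_iff.mp hij i).mp (le_refl i))
  · refine hasWitnessedFamily_top (fun i => {i}ᶜ) (fun i => ⟨i + 1, by decide +revert⟩)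
      (fun i j hij => by simpa using hij)
      (by simp only [HasPairWitnesses, Set.mem_compl_singleton_iff]; decide)

lemma hasWitnessedFamily_choose {m : ℕ} (hm : 2 ≤ m) :
    HasWitnessedFamily m (m.choose (m / 2)) := by
  have h := hasWitnessedFamily_pairFamily (ι := {s : Finset (Fin m) // s.card = m / 2})
    (fun s => (s.1 : Set (Fin m)))
    (fun s => Finset.coe_nonempty.mpr (Finset.card_pos.mp (by omega)))
    fun s t hst hsub => hst (Subtype.ext
      (Finset.eq_of_subset_of_card_le (Finset.coe_subset.mp hsub) (by rw [s.2, t.2])))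
  rwa [Fintype.card_finset_len, Fintype.card_fin] at h

namespace Nat

lemma two_pow_le_centralBinom (n : ℕ) : 2 ^ n ≤ n.centralBinom := by
  induction n with
  | zero => simp
  | succ n ih =>
    have h : (n + 1) * (2 * n.centralBinom) ≤ (n + 1) * (n + 1).centralBinom := by
      rw [succ_mul_centralBinom_succ]
      nlinarith
    have := Nat.le_of_mul_le_mul_left h n.succ_pos
    rw [pow_succ]
    omega

lemma choose_half_mul_self_le_centralBinom (n : ℕ) :
    n.choose (n / 2) * n.choose (n / 2) ≤ n.centralBinom := by
  rw [centralBinom_eq_two_mul_choose, two_mul, add_choose_eq]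
  calc n.choose (n / 2) * n.choose (n / 2) = n.choose (n / 2) * n.choose (n - n / 2) := by
        rw [choose_symm (div_le_self n 2)]
    _ ≤ _ := Finset.single_le_sum (a := (n / 2, n - n / 2))
        (f := fun ij : ℕ × ℕ => n.choose ij.1 * n.choose ij.2) (fun _ _ => Nat.zero_le _)
        (Finset.HasAntidiagonal.mem_antidiagonal.mpr (Nat.add_sub_cancel' (div_le_self n 2)))

end Nat

lemma choose_half_mul_self_le_choose (m : ℕ) :
    (m / 2).choose (m / 2 / 2) * (m / 2).choose (m / 2 / 2) ≤ m.choose (m / 2) :=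
  (Nat.choose_half_mul_self_le_centralBinom _).trans
    (Nat.centralBinom_eq_two_mul_choose _ ▸ Nat.choose_le_choose _ (by omega))

lemma two_pow_div_sqrt_le_choose_sub_one {m : ℕ} (hm : 3 ≤ m) :
    (2 : ℝ) ^ (m / 2) / √m ≤ ((m.choose (m / 2) - 1 : ℕ) : ℝ) := by
  set K := m.choose (m / 2)
  have hpow : 2 ^ (m / 2) ≤ K := (Nat.two_pow_le_centralBinom _).trans
    (Nat.centralBinom_eq_two_mul_choose _ ▸ Nat.choose_le_choose _ (by omega))
  have hK : 3 ≤ K := hm.trans (by simpa using Nat.choose_le_middle 1 m)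
  have hmR : (3 : ℝ) ≤ m := by exact_mod_cast hm
  have hsqrt : (3 / 2 : ℝ) ≤ √m := Real.le_sqrt_of_sq_le (by linarith)
  rw [div_le_iff₀ (by positivity), Nat.cast_sub (by omega)]
  have hpowR : (2 : ℝ) ^ (m / 2) ≤ K := by exact_mod_cast hpow
  have hKR : (3 : ℝ) ≤ K := by exact_mod_cast hK
  nlinarith

/-- For `m < 3` the binomial coefficient `C(m, ⌊m/2⌋)` is too small, and complete graphs on
`m + 1` vertices are used instead. -/
lemma exists_hasWitnessedFamily (m : ℕ) : ∃ K, HasWitnessedFamily m K ∧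
    (m / 2).choose (m / 2 / 2) * (m / 2).choose (m / 2 / 2) ≤ K ∧
    (2 : ℝ) ^ (m / 2) / √m ≤ ((K - 1 : ℕ) : ℝ) := by
  rcases lt_or_ge m 3 with hm | hm
  · refine ⟨m + 1, hasWitnessedFamily_of_lt_three hm, ?_⟩
    interval_cases m
    · simp
    · simp
    · refine ⟨by decide, ?_⟩
      rw [div_le_iff₀ (by positivity)]
      norm_num
  · exact ⟨_, hasWitnessedFamily_choose (by omega), choose_half_mul_self_le_choose m,
      two_pow_div_sqrt_le_choose_sub_one hm⟩

theorem stmt9 (m : ℕ) :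
    ∃ (V : Type) (G : SimpleGraph V) (𝓗 : Set (Set V)),
      (∀ H ∈ 𝓗, (G.induce H).Connected) ∧ NonPiercing G 𝓗 ∧
      treewidth G ≤ (m : ℕ∞) ∧
      ∀ Q : SimpleGraph ↥𝓗,
        (∀ v : V, {H : ↥𝓗 | v ∈ (H : Set V)}.Nonempty →
          (Q.induce {H : ↥𝓗 | v ∈ (H : Set V)}).Connected) →
        (∃ f : Fin (Nat.choose (m / 2) (m / 2 / 2)) × Fin (Nat.choose (m / 2) (m / 2 / 2)) → ↥𝓗,
          Function.Injective f ∧ ∀ p q, gridAdj p q → Q.Adj (f p) (f q)) ∧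
        ENNReal.ofReal ((2 : ℝ) ^ (m / 2) / Real.sqrt m) ≤ (treewidth Q : ℝ≥0∞) := by
  obtain ⟨K, ⟨ι, _, V, G, H, rfl, hconn, hnp, htw, hinj, hwit⟩, hgrid, hbound⟩ :=
    exists_hasWitnessedFamily m
  refine ⟨V, G, Set.range H, Set.forall_mem_range.mpr hconn, hnp, htw, fun Q hQ => ?_⟩
  have hclique := IsDualSupport.isNClique_image_rangeFactorization hQ hinj hwit
  refine ⟨exists_injective_gridAdj_of_isNClique hclique hgrid, ?_⟩
  calc ENNReal.ofReal ((2 : ℝ) ^ (m / 2) / √m)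
      ≤ (((Fintype.card ι - 1 : ℕ) : ℕ∞) : ℝ≥0∞) := by
        simpa using ENNReal.ofReal_le_ofReal hbound
    _ ≤ (treewidth Q : ℝ≥0∞) := ENat.toENNReal_le.mpr (le_treewidth_of_isNClique hclique)
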